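/- arXiv:2112.04658 — 3 statements merged into one kernel-verified Lean document; each statement's English description precedes it below -/
import Mathlib

section
/- The function H(r,z) = z(1 - z²)²(r² - 4)² is a first integral of the system dr/dt = (1 - 0.25 r²)²(1 - z²)(1 - 5z²), dz/dt = r z (1 - 0.25 r²)(1 - z²)²; that is, along any solution (r(t), z(t)) of this ODE system, d/dt [H(r(t), z(t))] = 0. -/
noncomputable def Dr21 (r z : ℝ) : ℝ := (1 - 0.25 * r ^ 2) ^ 2 * (1 - z ^ 2) * (1 - 5 * z ^ 2)

noncomputable def Dz21 (r z : ℝ) : ℝ := r * z * (1 - 0.25 * r ^ 2) * (1 - z ^ 2) ^ 2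

/-- First integral of the secondary-drag dynamics in a 2×1 cross-section. -/
noncomputable def H21 (r z : ℝ) : ℝ := z * (1 - z ^ 2) ^ 2 * (r ^ 2 - 4) ^ 2

/-- H is a first integral: along any solution of the drag ODE system, d/dt H(r(t),z(t)) = 0. -/
theorem H21_first_integral (r z : ℝ → ℝ)
    (hr : ∀ t, HasDerivAt r (Dr21 (r t) (z t)) t)
    (hz : ∀ t, HasDerivAt z (Dz21 (r t) (z t)) t) :
    ∀ t, HasDerivAt (fun t => H21 (r t) (z t)) 0 t := by
  intro t
  have hz1 := (((hz t).pow 2).const_sub 1).pow 2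
  have hr1 := (((hr t).pow 2).sub_const 4).pow 2
  have h := ((hz t).mul hz1).mul hr1
  have : (fun t => H21 (r t) (z t)) = fun y => z y * (1 - z y ^ 2) ^ 2 * (r y ^ 2 - 4) ^ 2 := by
    funext y; simp [H21]
  rw [this]
  refine h.congr_deriv ?_
  unfold Dr21 Dz21
  simp only [Pi.pow_apply, Pi.mul_apply]
  push_cast
  ring
end

section
/- If (r(t), z(t)) solves dr/dt = D_r(r,z), dz/dt = D_z(r,z) with D_r(r,z) = (1 - 0.25 r²)²(1 - z²)(1 - 5z²), D_z(r,z) = r z (1 - 0.25 r²)(1 - z²)², and the initial condition lies in the open rectangle (-2,2) × (0,1), then the solution remains in (-2,2) × (0,1) for all time in its interval of existence. -/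
open Set

/-- Sign persistence: if `v' = f · v` on an order-connected set `I`, with `f` continuous
at points of `I`, and `v t₀ > 0`, then `v > 0` throughout `I`. -/
lemma sign_persist {I : Set ℝ} (hI : I.OrdConnected) (v f : ℝ → ℝ)
    (hv : ∀ t ∈ I, HasDerivAt v (f t * v t) t)
    (hfc : ∀ t ∈ I, ContinuousAt f t)
    {t₀ : ℝ} (ht₀ : t₀ ∈ I) (h0 : 0 < v t₀) : ∀ t ∈ I, 0 < v t := by
  intro t ht
  by_contra hle
  push_neg at hle
  have hJI : uIcc t₀ t ⊆ I := hI.uIcc_subset ht₀ ht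
  have hvc : ContinuousOn v (uIcc t₀ t) := fun s hs =>
    ((hv s (hJI hs)).continuousAt).continuousWithinAt
  -- by IVT, v vanishes somewhere between t₀ and t
  obtain ⟨s, hs, hvs⟩ : ∃ s ∈ uIcc t₀ t, v s = 0 := by
    have h0mem : (0 : ℝ) ∈ uIcc (v t₀) (v t) := by
      rcases le_total (v t₀) (v t) with h | h
      · rw [uIcc_of_le h]; exact ⟨by linarith, by linarith⟩
      · rw [uIcc_of_ge h]; exact ⟨by linarith, by linarith⟩
    obtain ⟨s, hs, hvs⟩ := intermediate_value_uIcc hvc h0mem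
    exact ⟨s, hs, hvs⟩
  -- a bound for f on the interval
  obtain ⟨C, hC⟩ := isCompact_uIcc.exists_bound_of_continuousOn
    (fun s hs => (hfc s (hJI hs)).continuousWithinAt)
  set K : ℝ := max C 0 with hKdef
  have hK0 : 0 ≤ K := le_max_right _ _
  have hfK : ∀ s ∈ uIcc t₀ t, |f s| ≤ K := fun s hs =>
    le_trans (by simpa using hC s hs) (le_max_left _ _)
  -- the truncated vector field
  set V : ℝ → ℝ → ℝ := fun τ x => max (-K) (min K (f τ)) * x with hVdef
  have hcoef : ∀ τ, |max (-K) (min K (f τ))| ≤ K := by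
    intro τ
    rw [abs_le]
    constructor
    · exact le_max_left _ _
    · exact max_le (by linarith) (min_le_left _ _)
  have hVlip : ∀ τ, LipschitzWith K.toNNReal (V τ) := by
    intro τ
    apply LipschitzWith.of_dist_le_mul
    intro x y
    simp only [hVdef, Real.dist_eq, Real.coe_toNNReal K hK0]
    rw [← mul_sub, abs_mul]
    exact mul_le_mul_of_nonneg_right (hcoef τ) (abs_nonneg _)
  have hVeq : ∀ τ ∈ uIcc t₀ t, V τ (v τ) = f τ * v τ := by
    intro τ hτ
    have h := hfK τ hτ
    rw [abs_le] at h
    simp only [hVdef]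
    rw [min_eq_right h.2, max_eq_right h.1]
  have hV0 : ∀ τ, V τ 0 = 0 := fun τ => mul_zero _
  -- zero is a solution; uniqueness forces v t₀ = 0, contradiction
  have key : v t₀ = 0 := by
    rcases le_total t₀ s with hts | hst
    · -- t₀ ≤ s, go backwards from s
      have hsub : Icc t₀ s ⊆ uIcc t₀ t := ordConnected_uIcc.out left_mem_uIcc hs
      have := ODE_solution_unique_of_mem_Icc_left (v := V) (s := fun _ => (univ : Set ℝ))
        (K := K.toNNReal) (f := v) (g := fun _ => (0 : ℝ)) (a := t₀) (b := s)
        (fun τ _ => (hVlip τ).lipschitzOnWith)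
        (hvc.mono hsub)
        (fun τ hτ => by
          rw [hVeq τ (hsub (Ioc_subset_Icc_self hτ))]
          exact (hv τ (hJI (hsub (Ioc_subset_Icc_self hτ)))).hasDerivWithinAt)
        (fun τ _ => mem_univ _)
        continuousOn_const
        (fun τ _ => by
          rw [hV0 τ]; exact hasDerivWithinAt_const _ _ _)
        (fun τ _ => mem_univ _)
        (by simpa using hvs)
      have := this (left_mem_Icc.mpr hts)
      simpa using this
    · -- s ≤ t₀, go forwards from s
      have hsub : Icc s t₀ ⊆ uIcc t₀ t := ordConnected_uIcc.out hs left_mem_uIcc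
      have := ODE_solution_unique_of_mem_Icc_right (v := V) (s := fun _ => (univ : Set ℝ))
        (K := K.toNNReal) (f := v) (g := fun _ => (0 : ℝ)) (a := s) (b := t₀)
        (fun τ _ => (hVlip τ).lipschitzOnWith)
        (hvc.mono hsub)
        (fun τ hτ => by
          rw [hVeq τ (hsub (Ico_subset_Icc_self hτ))]
          exact (hv τ (hJI (hsub (Ico_subset_Icc_self hτ)))).hasDerivWithinAt)
        (fun τ _ => mem_univ _)
        continuousOn_const
        (fun τ _ => by
          rw [hV0 τ]; exact hasDerivWithinAt_const _ _ _)
        (fun τ _ => mem_univ _)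
        (by simpa using hvs)
      have := this (right_mem_Icc.mpr hst)
      simpa using this
  linarith

/-- If a solution of the secondary-drag ODE system starts in the open rectangle
(-2,2) × (0,1), it remains there for all time in its interval of existence. -/
theorem open_rectangle_invariant (I : Set ℝ) (hI : I.OrdConnected)
    (r z : ℝ → ℝ)
    (hr : ∀ t ∈ I, HasDerivAt r (Dr21 (r t) (z t)) t)
    (hz : ∀ t ∈ I, HasDerivAt z (Dz21 (r t) (z t)) t)
    (t₀ : ℝ) (ht₀ : t₀ ∈ I)
    (h₀ : r t₀ ∈ Set.Ioo (-2 : ℝ) 2 ∧ z t₀ ∈ Set.Ioo (0 : ℝ) 1) :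
    ∀ t ∈ I, r t ∈ Set.Ioo (-2 : ℝ) 2 ∧ z t ∈ Set.Ioo (0 : ℝ) 1 := by
  obtain ⟨⟨hr1, hr2⟩, hz1, hz2⟩ := h₀
  have hrc : ∀ t ∈ I, ContinuousAt r t := fun t ht => (hr t ht).continuousAt
  have hzc : ∀ t ∈ I, ContinuousAt z t := fun t ht => (hz t ht).continuousAt
  -- v₁ = 1 - 0.25 r², with v₁' = f₁ v₁
  have hv1 : ∀ t ∈ I, 0 < 1 - 0.25 * r t ^ 2 := by
    apply sign_persist hI _ (fun t => -0.5 * r t * (1 - 0.25 * r t ^ 2) *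
      (1 - z t ^ 2) * (1 - 5 * z t ^ 2)) _ _ ht₀
    · norm_num; nlinarith
    · intro t ht
      have h : HasDerivAt (fun x => 1 - 0.25 * r x ^ 2) _ t := (((hr t ht).pow 2).const_mul (0.25 : ℝ)).const_sub 1
      convert h using 1
      simp only [Dr21]
      ring
    · intro t ht
      have h1 := hrc t ht
      have h2 := hzc t ht
      exact (((continuousAt_const.mul h1).mul
        (continuousAt_const.sub (continuousAt_const.mul (h1.pow 2)))).mul
        (continuousAt_const.sub (h2.pow 2))).mul
        (continuousAt_const.sub (continuousAt_const.mul (h2.pow 2)))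
  -- v₂ = z, with z' = f₂ z
  have hv2 : ∀ t ∈ I, 0 < z t := by
    apply sign_persist hI _ (fun t => r t * (1 - 0.25 * r t ^ 2) * (1 - z t ^ 2) ^ 2) _ _ ht₀ hz1
    · intro t ht
      have h := hz t ht
      convert h using 1
      simp only [Dz21]
      ring
    · intro t ht
      have h1 := hrc t ht
      have h2 := hzc t ht
      exact (h1.mul (continuousAt_const.sub (continuousAt_const.mul (h1.pow 2)))).mul
        ((continuousAt_const.sub (h2.pow 2)).pow 2)
  -- v₃ = 1 - z², with v₃' = f₃ v₃
  have hv3 : ∀ t ∈ I, 0 < 1 - z t ^ 2 := by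
    apply sign_persist hI _ (fun t => -2 * z t ^ 2 * r t * (1 - 0.25 * r t ^ 2) *
      (1 - z t ^ 2)) _ _ ht₀
    · nlinarith
    · intro t ht
      have h : HasDerivAt (fun x => 1 - z x ^ 2) _ t := ((hz t ht).pow 2).const_sub 1
      convert h using 1
      simp only [Dz21]
      ring
    · intro t ht
      have h1 := hrc t ht
      have h2 := hzc t ht
      exact (((continuousAt_const.mul (h2.pow 2)).mul h1).mul
        (continuousAt_const.sub (continuousAt_const.mul (h1.pow 2)))).mul
        (continuousAt_const.sub (h2.pow 2))
  intro t ht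
  have h1 := hv1 t ht
  have h2 := hv2 t ht
  have h3 := hv3 t ht
  refine ⟨⟨?_, ?_⟩, h2, ?_⟩ <;> nlinarith
end

section
/- For the separable ODE dr/dz = [(1 - r²)(1 - 1.25 z²)] / [4 r z (1 - 0.25 z²)] (valid where r z (1 - 0.25 z²) ≠ 0), any C¹ solution r(z) satisfies that z(z - 2)²(z + 2)²(1 - r(z)²)² is constant. -/
/-- Any C¹ solution of the separable ODE
dr/dz = (1 - r²)(1 - 1.25 z²) / (4 r z (1 - 0.25 z²)) (where r z (1 - 0.25 z²) ≠ 0)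
keeps z(z - 2)²(z + 2)²(1 - r(z)²)² constant. -/
theorem separable_trajectories_1x2 (s : Set ℝ) (hs : s.OrdConnected) (r : ℝ → ℝ)
    (hne : ∀ z ∈ s, r z * z * (1 - 0.25 * z ^ 2) ≠ 0)
    (hode : ∀ z ∈ s, HasDerivAt r
      (((1 - r z ^ 2) * (1 - 1.25 * z ^ 2)) / (4 * r z * z * (1 - 0.25 * z ^ 2))) z) :
    ∀ z₁ ∈ s, ∀ z₂ ∈ s,
      z₁ * (z₁ - 2) ^ 2 * (z₁ + 2) ^ 2 * (1 - r z₁ ^ 2) ^ 2 =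
      z₂ * (z₂ - 2) ^ 2 * (z₂ + 2) ^ 2 * (1 - r z₂ ^ 2) ^ 2 := by
  set F : ℝ → ℝ := fun z => z * (z - 2) ^ 2 * (z + 2) ^ 2 * (1 - r z ^ 2) ^ 2 with hF
  have key : ∀ z ∈ s, HasDerivAt F 0 z := by
    intro z hz
    have hne' := hne z hz
    have hr0 : r z ≠ 0 := fun h => hne' (by rw [h]; ring)
    have hz0 : z ≠ 0 := fun h => hne' (by rw [h]; ring)
    have hq0 : (1 - 0.25 * z ^ 2) ≠ 0 := fun h => hne' (by rw [h]; ring)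
    set r' : ℝ := ((1 - r z ^ 2) * (1 - 1.25 * z ^ 2)) / (4 * r z * z * (1 - 0.25 * z ^ 2))
    have hr := hode z hz
    have h1 : HasDerivAt (fun z : ℝ => z * (z - 2) ^ 2 * (z + 2) ^ 2)
        ((1 * (z - 2) ^ 2 + z * (2 * (z - 2) ^ 1 * 1)) * (z + 2) ^ 2
          + z * (z - 2) ^ 2 * (2 * (z + 2) ^ 1 * 1)) z := by
      exact (((hasDerivAt_id z).mul (((hasDerivAt_id z).sub_const 2).pow 2)).mul
        (((hasDerivAt_id z).add_const 2).pow 2))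
    have h2 : HasDerivAt (fun z : ℝ => (1 - r z ^ 2) ^ 2)
        (2 * (1 - r z ^ 2) ^ 1 * (0 - 2 * r z ^ 1 * r')) z :=
      ((hasDerivAt_const z 1).sub (hr.pow 2)).pow 2
    have h := h1.mul h2
    refine h.congr_deriv (Eq.symm ?_)
    show (0 : ℝ) = _
    simp only [r']
    have hq1 : (4 : ℝ) - z ^ 2 ≠ 0 := fun h => hq0 (by linear_combination (0.25 : ℝ) * h)
    rw [show (1 : ℝ) - 0.25 * z ^ 2 = (4 - z ^ 2) / 4 by ring]
    field_simp
    ring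
  have hconv : Convex ℝ s := hs.convex
  intro z₁ hz₁ z₂ hz₂
  have := hconv.norm_image_sub_le_of_norm_hasFDerivWithin_le
    (C := 0) (f' := fun _ => (1 : ℝ →L[ℝ] ℝ).smulRight (0 : ℝ))
    (fun x hx => (key x hx).hasFDerivAt.hasFDerivWithinAt)
    (fun x _ => le_of_eq (by simp)) hz₂ hz₁
  have : ‖F z₁ - F z₂‖ ≤ 0 := by simpa using this
  have : F z₁ = F z₂ := by
    have := norm_sub_eq_zero_iff.mp (le_antisymm this (norm_nonneg _))
    exact this
  simpa [hF] using this
end
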